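/- Let n ≥ 1, d > 0, ε > 0, and let Δ, ρ, γ, μ, β be real numbers. Let Ã be a real symmetric n×n matrix, let x* ∈ {±1}^n and X* := x* (x*)^T, and let S' ⊆ S ⊆ {1,…,n} with |S'| ≥ (1−2μ−β)·n. Let X be a real n×n symmetric positive semidefinite matrix with X_ii = 1 for all i. Assume: (i) ⟨Ã_S, X⟩ ≥ (2+Δ)·(1−μ−β)·n·√d; (ii) SDP(Ã_S − Ã_{S'}) ≤ γ·n·√d; (iii) SDP(Ã_{S'} − (εd/n)·X*_{S'}) ≤ (2+ρ)·(1−2μ−β)·n·√d. Then ⟨X, X*⟩ ≥ (n²/(ε√d)) · ((2+Δ)(1−μ−β) − γ − (2+ρ)(1−2μ−β)) − 2·(2μ+β)·n². -/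

import Mathlib

open Matrix

/-- Frobenius inner product ⟨A, B⟩ = Σ_{i,j} A_ij B_ij. -/
noncomputable def mip {n : ℕ} (A B : Matrix (Fin n) (Fin n) ℝ) : ℝ :=
  ∑ i, ∑ j, A i j * B i j

/-- Basic SDP value of a matrix. -/
noncomputable def SDP {n : ℕ} (M : Matrix (Fin n) (Fin n) ℝ) : ℝ :=
  sSup {v : ℝ | ∃ X : Matrix (Fin n) (Fin n) ℝ,
    X.PosSemidef ∧ (∀ i, X i i = 1) ∧ v = mip M X}

/-- Restriction M_S of a matrix to a principal submatrix (zeroing entries outside S×S). -/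
def restrict {n : ℕ} (M : Matrix (Fin n) (Fin n) ℝ) (S : Finset (Fin n)) :
    Matrix (Fin n) (Fin n) ℝ :=
  fun i j => if i ∈ S ∧ j ∈ S then M i j else 0

lemma entry_bound {n : ℕ} {X : Matrix (Fin n) (Fin n) ℝ} (hX : X.PosSemidef)
    (hXd : ∀ i, X i i = 1) (i j : Fin n) : |X i j| ≤ 1 := by
  rcases eq_or_ne i j with rfl | hij
  · simp [hXd]
  · have hsym : X j i = X i j := by
      have := congrFun (congrFun hX.1 i) j
      simpa [Matrix.conjTranspose_apply] using this
    have key : ∀ c : ℝ, c * c = 1 → 0 ≤ 2 + 2 * c * X i j := by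
      intro c hc2
      have h := hX.dotProduct_mulVec_nonneg (Pi.single i 1 + Pi.single j c)
      have hcalc : dotProduct (star (Pi.single i 1 + Pi.single j c))
          (X *ᵥ (Pi.single i 1 + Pi.single j c)) = X i i + c * X i j + c * X j i + c * c * X j j := by
        rw [star_trivial, Matrix.mulVec_add, Matrix.mulVec_single, Matrix.mulVec_single]
        simp [add_dotProduct, dotProduct_add, single_dotProduct]
        ring
      rw [hcalc, hXd, hXd, hsym, hc2] at h
      linarith
    have h1 := key 1 (by norm_num)
    have h2 := key (-1) (by norm_num)
    rw [abs_le]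
    constructor <;> linarith

lemma mip_le_SDP {n : ℕ} (M X : Matrix (Fin n) (Fin n) ℝ) (hX : X.PosSemidef)
    (hXd : ∀ i, X i i = 1) : mip M X ≤ SDP M := by
  apply le_csSup
  · refine ⟨∑ i, ∑ j, |M i j|, ?_⟩
    rintro v ⟨Y, hY, hYd, rfl⟩
    apply Finset.sum_le_sum
    intro i _
    apply Finset.sum_le_sum
    intro j _
    calc M i j * Y i j ≤ |M i j * Y i j| := le_abs_self _
      _ = |M i j| * |Y i j| := abs_mul _ _
      _ ≤ |M i j| * 1 := by
          exact mul_le_mul_of_nonneg_left (entry_bound hY hYd i j) (abs_nonneg _)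
      _ = |M i j| := mul_one _
  · exact ⟨X, hX, hXd, rfl⟩

lemma mip_sub {n : ℕ} (A B X : Matrix (Fin n) (Fin n) ℝ) :
    mip (A - B) X = mip A X - mip B X := by
  simp [mip, Matrix.sub_apply, sub_mul, Finset.sum_sub_distrib]

lemma mip_smul {n : ℕ} (c : ℝ) (A X : Matrix (Fin n) (Fin n) ℝ) :
    mip (c • A) X = c * mip A X := by
  simp [mip, Matrix.smul_apply, Finset.mul_sum, mul_assoc]

/-- Deterministic core of Lemma 5.4: correlation lower bound on the full matrices. -/
theorem correlation_lower_bound_full {n : ℕ} (hn : 1 ≤ n)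
    (d ε : ℝ) (hd : 0 < d) (hε : 0 < ε) (Δ ρ γ μ β : ℝ)
    (Atil : Matrix (Fin n) (Fin n) ℝ) (hAsymm : Atil.IsSymm)
    (xstar : Fin n → ℝ) (hxs : ∀ i, xstar i = 1 ∨ xstar i = -1)
    (Xstar : Matrix (Fin n) (Fin n) ℝ)
    (hXstar : Xstar = Matrix.vecMulVec xstar xstar)
    (S S' : Finset (Fin n)) (hSS : S' ⊆ S)
    (hcard : (1 - 2 * μ - β) * n ≤ (S'.card : ℝ))
    (X : Matrix (Fin n) (Fin n) ℝ) (hX : X.PosSemidef) (hXd : ∀ i, X i i = 1)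
    (h1 : (2 + Δ) * (1 - μ - β) * n * Real.sqrt d ≤ mip (restrict Atil S) X)
    (h2 : SDP (restrict Atil S - restrict Atil S') ≤ γ * n * Real.sqrt d)
    (h3 : SDP (restrict Atil S' - (ε * d / n) • restrict Xstar S') ≤
      (2 + ρ) * (1 - 2 * μ - β) * n * Real.sqrt d) :
    ((n : ℝ) ^ 2 / (ε * Real.sqrt d)) *
        ((2 + Δ) * (1 - μ - β) - γ - (2 + ρ) * (1 - 2 * μ - β)) -
      2 * (2 * μ + β) * (n : ℝ) ^ 2 ≤ mip X Xstar := by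
  have hn' : (0 : ℝ) < n := by exact_mod_cast hn
  set s := Real.sqrt d with hsdef
  have hs : 0 < s := Real.sqrt_pos.mpr hd
  have hss : s * s = d := Real.mul_self_sqrt hd.le
  set E := (2 + Δ) * (1 - μ - β) - γ - (2 + ρ) * (1 - 2 * μ - β) with hE
  -- step 1: bounds on mip values via SDP
  have h2' : mip (restrict Atil S) X - mip (restrict Atil S') X ≤ γ * n * s := by
    have := mip_le_SDP (restrict Atil S - restrict Atil S') X hX hXd
    rw [mip_sub] at this
    linarith
  have h3' : mip (restrict Atil S') X - (ε * d / n) * mip (restrict Xstar S') X ≤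
      (2 + ρ) * (1 - 2 * μ - β) * n * s := by
    have := mip_le_SDP (restrict Atil S' - (ε * d / n) • restrict Xstar S') X hX hXd
    rw [mip_sub, mip_smul] at this
    linarith
  set c := mip (restrict Xstar S') X with hc
  have h4 : E * n * s ≤ (ε * d / n) * c := by linarith
  -- step 2: c ≥ n²/(ε s) * E
  have h5 : (n : ℝ) ^ 2 / (ε * s) * E ≤ c := by
    rw [div_mul_eq_mul_div, div_le_iff₀ (by positivity)]
    have h4n : E * n * s * n ≤ (ε * d / n) * c * n :=
      mul_le_mul_of_nonneg_right h4 hn'.le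
    have heq : (ε * d / n) * c * n = ε * d * c := by field_simp
    rw [heq] at h4n
    rw [← mul_le_mul_iff_left₀ hs]
    have e1 : (n : ℝ) ^ 2 * E * s = E * n * s * n := by ring
    have e2 : c * (ε * s) * s = ε * d * c := by rw [← hss]; ring
    linarith
  -- step 3: mip X Xstar ≥ c - (n² - |S'|²)
  have hXb : ∀ i j, |X i j| ≤ 1 := entry_bound hX hXd
  have hXsb : ∀ i j, |Xstar i j| = 1 := by
    intro i j
    rw [hXstar, Matrix.vecMulVec_apply, abs_mul]
    rcases hxs i with h | h <;> rcases hxs j with h' | h' <;> simp [h, h']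
  have key : c - ((n : ℝ) ^ 2 - ((S'.card : ℝ)) ^ 2) ≤ mip X Xstar := by
    have expand : mip X Xstar - c =
        ∑ i, ∑ j, (if i ∈ S' ∧ j ∈ S' then (0 : ℝ) else X i j * Xstar i j) := by
      rw [hc]
      simp only [mip, restrict, ← Finset.sum_sub_distrib]
      apply Finset.sum_congr rfl; intro i _
      apply Finset.sum_congr rfl; intro j _
      split <;> ring
    have hterm : ∀ i j : Fin n,
        (if i ∈ S' ∧ j ∈ S' then (0 : ℝ) else -1) ≤
        (if i ∈ S' ∧ j ∈ S' then (0 : ℝ) else X i j * Xstar i j) := by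
      intro i j
      split
      · exact le_rfl
      · have hb : |X i j * Xstar i j| ≤ 1 := by
          rw [abs_mul, hXsb, mul_one]; exact hXb i j
        linarith [(abs_le.mp hb).1]
    have hsum : ∑ i, ∑ j, (if i ∈ S' ∧ j ∈ S' then (0 : ℝ) else -1) =
        ((S'.card : ℝ)) ^ 2 - (n : ℝ) ^ 2 := by
      have : ∀ i j : Fin n, (if i ∈ S' ∧ j ∈ S' then (0 : ℝ) else -1) =
          (if i ∈ S' then (1:ℝ) else 0) * (if j ∈ S' then (1:ℝ) else 0) - 1 := by
        intro i j; by_cases h1 : i ∈ S' <;> by_cases h2 : j ∈ S' <;> simp [h1, h2]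
      simp only [this, Finset.sum_sub_distrib, ← Finset.sum_mul, ← Finset.mul_sum]
      simp [Finset.sum_ite_mem, Finset.univ_inter]
      ring
    have := Finset.sum_le_sum (fun i (_ : i ∈ Finset.univ) =>
      Finset.sum_le_sum (fun j (_ : j ∈ Finset.univ) => hterm i j))
    rw [hsum, ← expand] at this
    linarith
  -- step 4: n² - |S'|² ≤ 2(2μ+β)n²
  have hcard_le : ((S'.card : ℝ)) ≤ n := by
    have := Finset.card_le_card (Finset.subset_univ S')
    simpa using (Nat.cast_le.mpr this : ((S'.card : ℕ) : ℝ) ≤ (Finset.univ.card : ℝ))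
  have hcard0 : (0 : ℝ) ≤ (S'.card : ℝ) := Nat.cast_nonneg _
  have hfinal : (n : ℝ) ^ 2 - ((S'.card : ℝ)) ^ 2 ≤ 2 * (2 * μ + β) * (n : ℝ) ^ 2 := by
    set t := 1 - 2 * μ - β with ht
    set sc := ((S'.card : ℝ)) with hsc
    have h₁ : 0 ≤ (sc - t * n) * (sc + n) :=
      mul_nonneg (by linarith) (by linarith)
    have h₂ : 0 ≤ ((n : ℝ) - t * n) * ((n : ℝ) - sc) :=
      mul_nonneg (by nlinarith) (by linarith)
    nlinarith [h₁, h₂]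
  linarith
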